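/- arXiv:1604.08736 — 2 statements merged into one kernel-verified Lean document; each statement's English description precedes it below -/
import Mathlib

section
/- The completion step of Buchberger's algorithm preserves the generated ideal: if b, b̄ ∈ R satisfy b - b̄ ∈ Ideal(C) (the ideal generated by C), and g, ḡ ∈ R satisfy b →*_C g and b̄ →*_C ḡ, then the ideal generated by C ∪ {g - ḡ} equals the ideal generated by C. -/
/-- `a` reduces to `b` modulo `C`: there are `c ∈ C` and `m ∈ R` with
`b = a - m • c` (ring multiplication) and `b ≺ a`. -/
def redStep {R : Type*} [CommRing R] (prec : R → R → Prop) (C : Set R)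
    (a b : R) : Prop :=
  ∃ c ∈ C, ∃ m : R, b = a - m * c ∧ prec b a

lemma redStep_diff_mem {R : Type*} [CommRing R] {prec : R → R → Prop} {C : Set R}
    {a b : R} (h : Relation.ReflTransGen (redStep prec C) a b) :
    a - b ∈ Ideal.span C := by
  induction h with
  | refl => simp
  | @tail x y _ hstep ih =>
    obtain ⟨c, hc, m, rfl, -⟩ := hstep
    have h : a - (x - m * c) = (a - x) + m * c := by ring
    rw [h]
    exact Ideal.add_mem _ ih (Ideal.mul_mem_left _ _ (Ideal.subset_span hc))

/-- The completion step of Buchberger's algorithm preserves the generated ideal: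
if `b - b̄ ∈ Ideal(C)`, `b →*_C g` and `b̄ →*_C ḡ`, then
`Ideal(C ∪ {g - ḡ}) = Ideal(C)`. -/
theorem span_insert_normalForm_diff {R : Type*} [CommRing R]
    (prec : R → R → Prop)
    (hwf : WellFounded prec) (hirr : ∀ a : R, ¬ prec a a)
    (htrans : Transitive prec) (C : Set R) (b b' g g' : R)
    (hb : b - b' ∈ Ideal.span C)
    (hg : Relation.ReflTransGen (redStep prec C) b g)
    (hg' : Relation.ReflTransGen (redStep prec C) b' g') :
    Ideal.span (C ∪ {g - g'}) = Ideal.span C := by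
  have h1 := redStep_diff_mem hg
  have h2 := redStep_diff_mem hg'
  have hgg : g - g' ∈ Ideal.span C := by
    have : g - g' = (b - b') - (b - g) + (b' - g') := by ring
    rw [this]
    exact Ideal.add_mem _ (Ideal.sub_mem _ hb h1) h2
  apply le_antisymm
  · rw [Ideal.span_le]
    rintro x (hx | hx)
    · exact Ideal.subset_span hx
    · simp only [Set.mem_singleton_iff] at hx
      subst hx; exact hgg
  · exact Ideal.span_mono (Set.subset_union_left)
end

section
/- Connectibility-below criterion for confluence (generalized Newman lemma underlying the Main Theorem of reduction ring theory): suppose that for all a, b, b' ∈ R with a →_C b and a →_C b', the elements b and b' are connectible below a modulo C. Then →_C is confluent. -/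
/-- `→_C` is confluent: any two reduction chains from a common origin can be
joined. -/
def redConfluent {R : Type*} [CommRing R] (prec : R → R → Prop) (C : Set R) : Prop :=
  ∀ a b b' : R, Relation.ReflTransGen (redStep prec C) a b →
    Relation.ReflTransGen (redStep prec C) a b' →
    ∃ d : R, Relation.ReflTransGen (redStep prec C) b d ∧
      Relation.ReflTransGen (redStep prec C) b' d

/-- `b` and `b'` are connectible below `a` modulo `C`: there is a chain
`b = z₀, z₁, …, zₙ = b'` with each consecutive pair related by a reduction step
(in one direction or the other) and every `zⱼ ≺ a`. -/
def connectibleBelow {R : Type*} [CommRing R] (prec : R → R → Prop) (C : Set R)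
    (a b b' : R) : Prop :=
  ∃ (n : ℕ) (z : ℕ → R), z 0 = b ∧ z n = b' ∧
    (∀ i < n, redStep prec C (z i) (z (i + 1)) ∨ redStep prec C (z (i + 1)) (z i)) ∧
    (∀ j ≤ n, prec (z j) a)

/-- Connectibility-below criterion for confluence (generalized Newman lemma):
if for every fork `a →_C b`, `a →_C b'` the elements `b` and `b'` are
connectible below `a` modulo `C`, then `→_C` is confluent. -/
theorem redConfluent_of_connectibleBelow {R : Type*} [CommRing R]
    (prec : R → R → Prop)
    (hwf : WellFounded prec) (hirr : ∀ a : R, ¬ prec a a)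
    (htrans : Transitive prec) (C : Set R)
    (hconn : ∀ a b b' : R, redStep prec C a b → redStep prec C a b' →
      connectibleBelow prec C a b b') :
    redConfluent prec C := by
  intro a
  induction a using hwf.induction with
  | _ a IH =>
    intro b b' hab hab'
    rcases hab.cases_head with rfl | ⟨b1, hb1, hb1b⟩
    · exact ⟨b', hab', .refl⟩
    rcases hab'.cases_head with rfl | ⟨b1', hb1', hb1b'⟩
    · exact ⟨b, .refl, hab⟩
    -- joinability of connectible chains below a
    have key : ∀ n (z : ℕ → R),
        (∀ i < n, redStep prec C (z i) (z (i + 1)) ∨ redStep prec C (z (i + 1)) (z i)) →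
        (∀ j ≤ n, prec (z j) a) →
        ∃ d, Relation.ReflTransGen (redStep prec C) (z 0) d ∧
          Relation.ReflTransGen (redStep prec C) (z n) d := by
      intro n
      induction n with
      | zero => intro z _ _; exact ⟨z 0, .refl, .refl⟩
      | succ n ih =>
        intro z hstep hlt
        obtain ⟨d, hd0, hdn⟩ := ih z (fun i hi => hstep i (by omega))
          (fun j hj => hlt j (by omega))
        rcases hstep n (by omega) with h | h
        · obtain ⟨e, he1, he2⟩ := IH (z n) (hlt n (by omega)) _ _ hdn
            (Relation.ReflTransGen.single h)
          exact ⟨e, hd0.trans he1, he2⟩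
        · exact ⟨d, hd0, (Relation.ReflTransGen.single h).trans hdn⟩
    obtain ⟨n, z, hz0, hzn, hstep, hlt⟩ := hconn a b1 b1' hb1 hb1'
    obtain ⟨d0, hd0, hd0'⟩ := key n z hstep hlt
    rw [hz0] at hd0
    rw [hzn] at hd0'
    obtain ⟨-, -, -, -, hprec1⟩ := hb1
    obtain ⟨-, -, -, -, hprec1'⟩ := hb1'
    obtain ⟨d1, hbd1, hd0d1⟩ := IH b1 hprec1 _ _ hb1b hd0
    obtain ⟨d, hd1d, hb'd⟩ := IH b1' hprec1' _ _ (hd0'.trans hd0d1) hb1b'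
    exact ⟨d, hbd1.trans hd1d, hb'd⟩
end
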